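/- Let R be a Boolean ring and a = Σ_{i≥0} a_i x^i ∈ R[x]. Then a lies in the set {b - b^2·x : b ∈ R[x]} if and only if, for every i ≥ 0, the (finite) sum Σ_{j≥0} a_{(2i+1)·2^j - 1} equals 0 in R. -/

import Mathlib

/-!
In a Boolean ring squaring is additive and fixes coefficients, so `b ^ 2 = expand 2 b` and
`b ↦ b - b ^ 2 * X` is the linear map `T b = b - X · b(X²)`. Coefficientwise,
`(T b)_{2k} = b_{2k}` and `(T b)_{2k+1} = b_{2k+1} - b_k`. Every index has the form
`(2i+1)·2^j - 1`, and for fixed `i` these indices form the chain `m ↦ 2m + 1` starting at `2i`,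
along which `T` is a difference operator. Hence the partial sums of `T b` along a chain recover
`b` and vanish eventually; conversely, if all chain sums of `a` vanish, its partial chain sums
are finitely supported and are the coefficients of a preimage of `a`.
-/

open Polynomial Finset

lemma finsum_eq_sum_range_of_eq_zero {M : Type*} [AddCommMonoid M] {f : ℕ → M} {N : ℕ}
    (hf : ∀ j, N ≤ j → f j = 0) : ∑ᶠ j, f j = ∑ j ∈ range N, f j := by
  refine finsum_eq_sum_of_support_subset f fun j hj => ?_
  by_contra hjN
  exact hj (hf j (by simpa using hjN))

def chainIdx (i j : ℕ) : ℕ := (2 * i + 1) * 2 ^ j - 1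

lemma chainIdx_zero (i : ℕ) : chainIdx i 0 = 2 * i := by
  simp [chainIdx]

lemma chainIdx_succ (i j : ℕ) : chainIdx i (j + 1) = 2 * chainIdx i j + 1 := by
  have hpos : 0 < (2 * i + 1) * 2 ^ j := by positivity
  rw [chainIdx, chainIdx, pow_succ, ← mul_assoc]
  omega

lemma le_chainIdx (i j : ℕ) : j ≤ chainIdx i j := by
  have h1 : 2 ^ j ≤ (2 * i + 1) * 2 ^ j := Nat.le_mul_of_pos_left _ (by omega)
  have h2 : j < 2 ^ j := Nat.lt_two_pow_self
  simp only [chainIdx]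
  omega

lemma chainIdx_mono (i : ℕ) : Monotone (chainIdx i) := fun _ _ h =>
  Nat.sub_le_sub_right (Nat.mul_le_mul_left _ (Nat.pow_le_pow_right two_pos h)) 1

lemma exists_eq_chainIdx (n : ℕ) : ∃ i j, n = chainIdx i j := by
  obtain ⟨j, m, ⟨i, rfl⟩, hn⟩ := Nat.exists_eq_two_pow_mul_odd n.succ_ne_zero
  refine ⟨i, j, ?_⟩
  rw [chainIdx, mul_comm, ← hn]
  rfl

section CommRing

variable {R : Type*} [CommRing R]

lemma coeff_expand_two_mul_X_two_mul (b : R[X]) (k : ℕ) :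
    (expand R 2 b * X).coeff (2 * k) = 0 := by
  rcases k with _ | k
  · simp
  · rw [show 2 * (k + 1) = (2 * k + 1) + 1 by ring, coeff_mul_X, coeff_expand two_pos,
      if_neg (by omega)]

lemma coeff_expand_two_mul_X_two_mul_add_one (b : R[X]) (k : ℕ) :
    (expand R 2 b * X).coeff (2 * k + 1) = b.coeff k := by
  rw [coeff_mul_X, coeff_expand two_pos, if_pos (dvd_mul_right 2 k),
    Nat.mul_div_cancel_left k two_pos]

lemma sum_range_coeff_sub_expand_two_mul_X_chainIdx (b : R[X]) (i J : ℕ) :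
    ∑ j ∈ range (J + 1), (b - expand R 2 b * X).coeff (chainIdx i j) =
      b.coeff (chainIdx i J) := by
  induction J with
  | zero => simp [chainIdx_zero, coeff_expand_two_mul_X_two_mul]
  | succ J ih =>
    rw [sum_range_succ, ih, chainIdx_succ, coeff_sub, coeff_expand_two_mul_X_two_mul_add_one]
    ring

def chainPartialSum (a : R[X]) (n : ℕ) : R :=
  if n % 2 = 1 then a.coeff n + chainPartialSum a (n / 2) else a.coeff n
decreasing_by omega

lemma chainPartialSum_two_mul (a : R[X]) (k : ℕ) :
    chainPartialSum a (2 * k) = a.coeff (2 * k) := by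
  rw [chainPartialSum, if_neg (by omega)]

lemma chainPartialSum_two_mul_add_one (a : R[X]) (k : ℕ) :
    chainPartialSum a (2 * k + 1) = a.coeff (2 * k + 1) + chainPartialSum a k := by
  rw [chainPartialSum, if_pos (by omega), show (2 * k + 1) / 2 = k by omega]

lemma chainPartialSum_chainIdx (a : R[X]) (i J : ℕ) :
    chainPartialSum a (chainIdx i J) = ∑ j ∈ range (J + 1), a.coeff (chainIdx i j) := by
  induction J with
  | zero => simp [chainIdx_zero, chainPartialSum_two_mul]
  | succ J ih => rw [chainIdx_succ, chainPartialSum_two_mul_add_one, ih, ← chainIdx_succ,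
      sum_range_succ _ (J + 1), add_comm]

lemma chainPartialSum_eq_zero (a : R[X]) (H : ∀ i, ∑ᶠ j, a.coeff (chainIdx i j) = 0) {n : ℕ}
    (hn : a.natDegree < n) : chainPartialSum a n = 0 := by
  obtain ⟨i, J, rfl⟩ := exists_eq_chainIdx n
  rw [chainPartialSum_chainIdx, ← H i, finsum_eq_sum_range_of_eq_zero (N := J + 1) fun j hj =>
    coeff_eq_zero_of_natDegree_lt (hn.trans_le (chainIdx_mono i (by omega)))]

lemma exists_coeff_eq_chainPartialSum (a : R[X]) (H : ∀ i, ∑ᶠ j, a.coeff (chainIdx i j) = 0) :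
    ∃ b : R[X], ∀ n, b.coeff n = chainPartialSum a n := by
  refine ⟨∑ n ∈ range (a.natDegree + 1), monomial n (chainPartialSum a n), fun n => ?_⟩
  simp only [finsetSum_coeff, coeff_monomial, sum_ite_eq', mem_range]
  split_ifs with hn
  · rfl
  · exact (chainPartialSum_eq_zero a H (by omega)).symm

theorem exists_eq_sub_expand_two_mul_X_iff (a : R[X]) :
    (∃ b : R[X], a = b - expand R 2 b * X) ↔ ∀ i, ∑ᶠ j, a.coeff (chainIdx i j) = 0 := by
  constructor
  · rintro ⟨b, rfl⟩ i
    set N := (b - expand R 2 b * X).natDegree + b.natDegree + 1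
    have hvanish (p : R[X]) (hp : p.natDegree < N) (j : ℕ) (hj : N ≤ j) :
        p.coeff (chainIdx i j) = 0 :=
      coeff_eq_zero_of_natDegree_lt (hp.trans_le (hj.trans (le_chainIdx i j)))
    rw [finsum_eq_sum_range_of_eq_zero (N := N + 1) fun j hj => hvanish _ (by omega) j (by omega),
      sum_range_coeff_sub_expand_two_mul_X_chainIdx]
    exact hvanish b (by omega) N le_rfl
  · intro H
    obtain ⟨b, hb⟩ := exists_coeff_eq_chainPartialSum a H
    refine ⟨b, ext fun n => ?_⟩
    obtain ⟨k, rfl | rfl⟩ := Nat.even_or_odd' n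
    · rw [coeff_sub, coeff_expand_two_mul_X_two_mul, hb, chainPartialSum_two_mul, sub_zero]
    · rw [coeff_sub, coeff_expand_two_mul_X_two_mul_add_one, hb, hb,
        chainPartialSum_two_mul_add_one, add_sub_cancel_right]

end CommRing

lemma sq_eq_expand_two {R : Type*} [CommRing R] (hB : ∀ r : R, r ^ 2 = r) (b : R[X]) :
    b ^ 2 = expand R 2 b := by
  have h2 : (2 : R[X]) = 0 := by
    rw [← C_ofNat, show (2 : R) = 0 by linear_combination hB 2, C_0]
  induction b using Polynomial.induction_on' with
  | add p q hp hq => rw [map_add]; linear_combination hp + hq + p * q * h2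
  | monomial n r => rw [expand_monomial, monomial_pow, hB r]

/-- Let `R` be a Boolean ring and `a = Σ_{i≥0} a_i x^i ∈ R[x]`. Then `a` lies in the
set `{b - b^2·x : b ∈ R[x]}` if and only if, for every `i ≥ 0`, the (finite) sum
`Σ_{j≥0} a_{(2i+1)·2^j - 1}` equals `0` in `R`. -/
theorem stmt_4 (R : Type*) [CommRing R] (hB : ∀ r : R, r ^ 2 = r) (a : R[X]) :
    (∃ b : R[X], a = b - b ^ 2 * X) ↔
      (∀ i : ℕ, ∑ᶠ j : ℕ, a.coeff ((2 * i + 1) * 2 ^ j - 1) = 0) := by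
  simp only [sq_eq_expand_two hB]
  exact exists_eq_sub_expand_two_mul_X_iff a
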